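/- Let d ≥ 1 and let σ ∈ A_{d−1} be a (d−1)-simplex of the apartment complex. For a small lift σ̃ = {x_1,…,x_d} of σ (with x_0 = x_d − (1,…,1) and x_0 ⪇ x_1 ⪇ ⋯ ⪇ x_d), each difference x_i − x_{i−1} (1 ≤ i ≤ d) is the standard basis vector e_{w(i)} of Z^{⊕d} for a uniquely determined w(i), and w : {1,…,d} → {1,…,d} is a permutation. Then the map {1,…,d} → A_0 sending i to the class of x_{w^{-1}(i)} in A_0 (an element [σ̃] of T(σ)) does not depend on the choice of the small lift σ̃. -/

import Mathlib

/-!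
STATEMENT 4: Let `d ≥ 1` and `σ ∈ A_{d−1}`.  For a small lift `σ̃ = {x_1,…,x_d}` of
`σ` (periodically extended, with `x_0 = x_d − (1,…,1)`), each difference
`x_i − x_{i−1}` is a standard basis vector `e_{w(i)}` for a uniquely determined
index `w(i)`, and `w` is a permutation of `{1,…,d}`.  Moreover the map
`{1,…,d} → A_0`, `i ↦ class of x_{w^{-1}(i)}`, does not depend on the choice of the
small lift `σ̃`.

Encoding:  a small lift (periodically extended) is a chain `x : ℤ → ℤ^d` with
`x j ⪇ x (j+1)` and `x (j+d) = x j + (1,…,1)`; the function `w : ℤ → Fin d`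
records the direction of each step (`x (j+1) − x j = e_{w j}`); `w` being a
permutation is expressed by "injectivity modulo `d`" plus surjectivity, and the
independence of the lift is: if `w j = w' j'` then the classes of `x j` and
`x' j'` in `A_0` agree.
-/

/-- A (periodically extended) small lift of a `(d−1)`-simplex of the apartment:
a strictly increasing chain of period `d`. -/
def IsSmallChain (d : ℕ) (x : ℤ → (Fin d → ℤ)) : Prop :=
  (∀ j : ℤ, x j < x (j + 1)) ∧ ∀ j : ℤ, x (j + (d : ℤ)) = x j + 1

/-- The canonical surjection `q : ℤ^d → A_0 = ℤ^d/ℤ(1,…,1)`. -/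
def qA0 (d : ℕ) : (Fin d → ℤ) →+ (Fin d → ℤ) ⧸ AddSubgroup.zmultiples (1 : Fin d → ℤ) :=
  QuotientAddGroup.mk' _

/-!
Summing the steps over one period telescopes to `x (j + d) - x j = (1,…,1)`, so every
direction occurs exactly once among `d` consecutive steps; this makes `w` a permutation
modulo `d`. Two small lifts of the same simplex have the same set of points in `ℤ^d`
(it is the full preimage of the simplex), and in a chain the successor of a point is
determined by that set. Hence the step leaving a point, and with it its direction, does not
depend on the lift, and injectivity of `w` modulo `d` identifies the points up to the period.
-/

theorem Pi.single_left_injective {ι M : Type*} [DecidableEq ι] [Zero M] {b : M} (hb : b ≠ 0) :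
    Function.Injective (fun i : ι => (Pi.single i b : ι → M)) := by
  intro i i' h
  by_contra hne
  simpa [Pi.single_apply, hne, hb] using congrFun h i

theorem StrictMono.map_add_one_le_of_range_subset {α : Type*} [Preorder α] {f g : ℤ → α}
    (hf : StrictMono f) (hg : StrictMono g) (hfg : Set.range f ⊆ Set.range g) {i j : ℤ}
    (hij : f i = g j) : g (j + 1) ≤ f (i + 1) := by
  obtain ⟨m, hm⟩ := hfg ⟨i + 1, rfl⟩
  have hjm : j < m := hg.lt_iff_lt.mp (by rw [hm, ← hij]; exact hf (lt_add_one i))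
  rw [← hm]
  exact hg.monotone (by omega)

theorem StrictMono.map_add_one_eq_of_range_eq {α : Type*} [PartialOrder α] {f g : ℤ → α}
    (hf : StrictMono f) (hg : StrictMono g) (hfg : Set.range f = Set.range g) {i j : ℤ}
    (hij : f i = g j) : f (i + 1) = g (j + 1) :=
  le_antisymm (hg.map_add_one_le_of_range_subset hf hfg.symm.subset hij.symm)
    (hf.map_add_one_le_of_range_subset hg hfg.subset hij)

theorem qA0_eq_iff {d : ℕ} {a b : Fin d → ℤ} : qA0 d a = qA0 d b ↔ ∃ m : ℤ, b = a + m • 1 := by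
  simp only [qA0, QuotientAddGroup.mk'_eq_mk', AddSubgroup.exists_mem_zmultiples]
  exact exists_congr fun m => eq_comm

theorem step_dir_unique {d : ℕ} {x : ℤ → Fin d → ℤ} {w : ℤ → Fin d}
    (hw : ∀ j : ℤ, x (j + 1) = x j + Pi.single (w j) 1) {j : ℤ} {k : Fin d}
    (hk : x (j + 1) = x j + Pi.single k 1) : k = w j :=
  Pi.single_left_injective one_ne_zero (add_left_cancel (hk.symm.trans (hw j)))

namespace IsSmallChain

variable {d : ℕ} {x : ℤ → Fin d → ℤ} {w : ℤ → Fin d}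

theorem strictMono (hx : IsSmallChain d x) : StrictMono x :=
  strictMono_int_of_lt_succ hx.1

theorem add_mul_period (hx : IsSmallChain d x) (j m : ℤ) :
    x (j + m * d) = x j + m • (1 : Fin d → ℤ) := by
  induction m using Int.induction_on with
  | zero => simp
  | succ n ih =>
    rw [show j + (n + 1 : ℤ) * d = j + n * d + d by ring, hx.2, ih, add_smul, one_smul, add_assoc]
  | pred n ih =>
    rw [show j + (-n : ℤ) * d = j + (-n - 1 : ℤ) * d + d by ring, hx.2] at ih
    rw [eq_sub_of_add_eq ih, sub_smul, one_smul, add_sub_assoc]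

theorem range_eq_preimage_qA0 (hx : IsSmallChain d x) :
    Set.range x = qA0 d ⁻¹' Set.range (fun j => qA0 d (x j)) := by
  refine subset_antisymm (fun _ ⟨j, hj⟩ => ⟨j, hj ▸ rfl⟩) ?_
  rintro a ⟨j, hj⟩
  obtain ⟨m, rfl⟩ := qA0_eq_iff.mp hj
  exact ⟨j + m * d, hx.add_mul_period j m⟩

theorem range_eq_of_range_qA0_eq {x' : ℤ → Fin d → ℤ} (hx : IsSmallChain d x)
    (hx' : IsSmallChain d x')
    (himg : Set.range (fun j => qA0 d (x j)) = Set.range (fun j => qA0 d (x' j))) :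
    Set.range x = Set.range x' := by
  rw [hx.range_eq_preimage_qA0, hx'.range_eq_preimage_qA0, himg]

theorem dir_periodic (hx : IsSmallChain d x)
    (hw : ∀ j : ℤ, x (j + 1) = x j + Pi.single (w j) 1) : Function.Periodic w d := by
  intro j
  refine (step_dir_unique hw ?_).symm
  rw [add_right_comm, hx.2, hx.2, hw, add_right_comm]

theorem sum_single_dir (hx : IsSmallChain d x)
    (hw : ∀ j : ℤ, x (j + 1) = x j + Pi.single (w j) 1) (j : ℤ) :
    ∑ t ∈ Finset.range d, (Pi.single (w (j + t)) 1 : Fin d → ℤ) = 1 := calc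
  _ = ∑ t ∈ Finset.range d, (x (j + ↑(t + 1)) - x (j + t)) := by
    refine Finset.sum_congr rfl fun t _ => ?_
    rw [Nat.cast_succ, ← add_assoc, hw, add_sub_cancel_left]
  _ = 1 := by rw [Finset.sum_range_sub (fun t => x (j + t)), hx.2]; simp

theorem card_filter_dir_eq_one (hx : IsSmallChain d x)
    (hw : ∀ j : ℤ, x (j + 1) = x j + Pi.single (w j) 1) (j : ℤ) (k : Fin d) :
    ((Finset.range d).filter (fun t : ℕ => w (j + t) = k)).card = 1 := by
  have hk := congrFun (hx.sum_single_dir hw j) k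
  simp only [Finset.sum_apply, Pi.single_apply, Pi.one_apply, eq_comm (a := k)] at hk
  exact_mod_cast (Finset.natCast_card_filter _ _).trans hk

theorem dvd_sub_of_dir_eq (hx : IsSmallChain d x)
    (hw : ∀ j : ℤ, x (j + 1) = x j + Pi.single (w j) 1) {j₁ j₂ : ℤ} (h : w j₁ = w j₂) :
    (d : ℤ) ∣ j₁ - j₂ := by
  have hd : (0 : ℤ) < d := by exact_mod_cast Fin.pos (w j₁)
  set r := (j₂ - j₁) % d
  have hr : 0 ≤ r ∧ r < d := ⟨Int.emod_nonneg _ hd.ne', Int.emod_lt_of_pos _ hd⟩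
  -- `j₁ + r` is the representative of `j₂` in the period window starting at `j₁`
  have hwr : w (j₁ + r) = w j₁ := by
    rw [h, ← (hx.dir_periodic hw).int_mul ((j₂ - j₁) / d) (j₁ + r), Int.cast_id]
    congr 1
    linarith [Int.emod_add_mul_ediv (j₂ - j₁) d]
  have hr0 : r.toNat = 0 := Finset.card_le_one.mp (hx.card_filter_dir_eq_one hw j₁ (w j₁)).le _
    (Finset.mem_filter.mpr ⟨Finset.mem_range.mpr (by omega), by rwa [Int.toNat_of_nonneg hr.1]⟩)
    _ (Finset.mem_filter.mpr ⟨Finset.mem_range.mpr (by omega), by simp⟩)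
  exact dvd_sub_comm.mp (Int.dvd_of_emod_eq_zero (by omega))

theorem exists_dir_eq (hx : IsSmallChain d x)
    (hw : ∀ j : ℤ, x (j + 1) = x j + Pi.single (w j) 1) (k : Fin d) : ∃ j : ℤ, w j = k := by
  obtain ⟨t, ht⟩ := Finset.card_pos.mp (hx.card_filter_dir_eq_one hw 0 k ▸ Nat.one_pos)
  exact ⟨t, by simpa using (Finset.mem_filter.mp ht).2⟩

theorem qA0_eq_of_dir_eq (hx : IsSmallChain d x)
    (hw : ∀ j : ℤ, x (j + 1) = x j + Pi.single (w j) 1) {j₁ j₂ : ℤ} (h : w j₁ = w j₂) :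
    qA0 d (x j₁) = qA0 d (x j₂) := by
  obtain ⟨c, hc⟩ := hx.dvd_sub_of_dir_eq hw h
  refine (qA0_eq_iff.mpr ⟨c, ?_⟩).symm
  rw [← hx.add_mul_period, show j₂ + c * d = j₁ by linarith]

end IsSmallChain

theorem statement4_general (d : ℕ)
    (x x' : ℤ → (Fin d → ℤ))
    (hx : IsSmallChain d x) (hx' : IsSmallChain d x')
    -- `x` and `x'` are small lifts of the same `(d−1)`-simplex `σ ∈ A_{d−1}`
    (himg : Set.range (fun j : ℤ => qA0 d (x j)) =
      Set.range (fun j : ℤ => qA0 d (x' j)))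
    (w w' : ℤ → Fin d)
    (hw : ∀ j : ℤ, x (j + 1) = x j + Pi.single (w j) 1)
    (hw' : ∀ j : ℤ, x' (j + 1) = x' j + Pi.single (w' j) 1) :
    -- each difference is a standard basis vector for a unique index (so `w` exists
    -- and is uniquely determined) …
    (∀ j : ℤ, ∃! k : Fin d, x (j + 1) = x j + Pi.single k 1) ∧
    -- … `w` is injective (on a period, i.e. modulo `d`) …
    (∀ j₁ j₂ : ℤ, w j₁ = w j₂ → (d : ℤ) ∣ j₁ - j₂) ∧
    -- … and surjective, hence a permutation of `{1,…,d}` …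
    (∀ k : Fin d, ∃ j : ℤ, w j = k) ∧
    -- … and the map `i ↦ class of x_{w⁻¹(i)}` is independent of the small lift:
    (∀ j j' : ℤ, w j = w' j' → qA0 d (x j) = qA0 d (x' j')) := by
  refine ⟨fun j => ⟨w j, hw j, fun k => step_dir_unique hw⟩,
    fun _ _ => hx.dvd_sub_of_dir_eq hw, hx.exists_dir_eq hw, fun j j' hjj' => ?_⟩
  have hrange := hx.range_eq_of_range_qA0_eq hx' himg
  obtain ⟨j'', hj''⟩ : x j ∈ Set.range x' := hrange ▸ ⟨j, rfl⟩
  have hsucc := hx.strictMono.map_add_one_eq_of_range_eq hx'.strictMono hrange hj''.symm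
  have hdir : w' j'' = w j := step_dir_unique hw (by rw [hsucc, hw', hj''])
  rw [← hj'']
  exact hx'.qA0_eq_of_dir_eq hw' (hdir.trans hjj')

/-- STATEMENT 4. -/
theorem statement4 (d : ℕ) (hd : 1 ≤ d)
    (x x' : ℤ → (Fin d → ℤ))
    (hx : IsSmallChain d x) (hx' : IsSmallChain d x')
    -- `x` and `x'` are small lifts of the same `(d−1)`-simplex `σ ∈ A_{d−1}`
    (himg : Set.range (fun j : ℤ => qA0 d (x j)) =
      Set.range (fun j : ℤ => qA0 d (x' j)))
    (w w' : ℤ → Fin d)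
    (hw : ∀ j : ℤ, x (j + 1) = x j + Pi.single (w j) 1)
    (hw' : ∀ j : ℤ, x' (j + 1) = x' j + Pi.single (w' j) 1) :
    -- each difference is a standard basis vector for a unique index (so `w` exists
    -- and is uniquely determined) …
    (∀ j : ℤ, ∃! k : Fin d, x (j + 1) = x j + Pi.single k 1) ∧
    -- … `w` is injective (on a period, i.e. modulo `d`) …
    (∀ j₁ j₂ : ℤ, w j₁ = w j₂ → (d : ℤ) ∣ j₁ - j₂) ∧
    -- … and surjective, hence a permutation of `{1,…,d}` …
    (∀ k : Fin d, ∃ j : ℤ, w j = k) ∧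
    -- … and the map `i ↦ class of x_{w⁻¹(i)}` is independent of the small lift:
    (∀ j j' : ℤ, w j = w' j' → qA0 d (x j) = qA0 d (x' j')) :=
  statement4_general d x x' hx hx' himg w w' hw hw'
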